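/- arXiv:2602.14112 — 3 statements merged into one kernel-verified Lean document; each statement's English description precedes it below -/
import Mathlib

section
/- Let p be a prime and let G = C_{p^{n_1}} × ⋯ × C_{p^{n_r}} be a finite abelian p-group, where the i-th factor is cyclic of order p^{n_i} with generator g_i (n_i ≥ 1). Let G̃ = ∑_{g ∈ G} g denote the sum of all group elements in the group algebra F_p[G]. Then G̃ = ∏_{j=1}^{r} (g_j − 1)^{p^{n_j} − 1} in F_p[G]. -/
/-- The finite abelian `p`-group `G = C_{p^{n_1}} × ⋯ × C_{p^{n_r}}`. -/
abbrev PGroup (p r : ℕ) (n : Fin r → ℕ) : Type :=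
  (i : Fin r) → Multiplicative (ZMod (p ^ n i))

/-- The generator `g_i` of the `i`-th cyclic factor of `G`. -/
noncomputable def pGen (p r : ℕ) (n : Fin r → ℕ) (i : Fin r) : PGroup p r n :=
  Pi.mulSingle i (Multiplicative.ofAdd 1)

open Finset Polynomial
lemma poly_lemma (p : ℕ) [Fact p.Prime] (k : ℕ) :
    ((X : Polynomial (ZMod p)) - 1) ^ (p ^ k - 1) = ∑ i ∈ range (p ^ k), X ^ i := by
  have hq : 0 < p ^ k := pow_pos (Fact.out (p := p.Prime)).pos k
  have hX : (X : Polynomial (ZMod p)) - 1 ≠ 0 := by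
    intro h
    simpa using congrArg (Polynomial.eval 0) h
  apply mul_right_cancel₀ hX
  rw [← pow_succ, Nat.sub_add_cancel hq, geom_sum_mul]
  have : ((X : Polynomial (ZMod p)) - 1) ^ (p ^ k) = X ^ (p ^ k) - 1 ^ (p ^ k) :=
    sub_pow_char_pow _ _ _
  simpa using this

lemma alg_lemma (p : ℕ) [Fact p.Prime] (k : ℕ) {R : Type*} [CommRing R] [Algebra (ZMod p) R]
    (u : R) : (u - 1) ^ (p ^ k - 1) = ∑ i ∈ range (p ^ k), u ^ i := by
  have := congrArg (aeval u) (poly_lemma p k)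
  simpa [map_pow, map_sub, map_sum] using this

lemma sum_zmod_range {q : ℕ} [NeZero q] {M : Type*} [AddCommMonoid M] (f : ZMod q → M) :
    ∑ i ∈ range q, f (i : ZMod q) = ∑ x : ZMod q, f x := by
  refine Finset.sum_nbij' (fun i => (i : ZMod q)) (fun x => x.val) ?_ ?_ ?_ ?_ ?_ <;>
    simp [ZMod.val_lt, ZMod.val_natCast_of_lt, ZMod.natCast_val, ZMod.cast_id,
      Finset.mem_range]
  exact fun i hi => Nat.mod_eq_of_lt hi


/-- For `G = C_{p^{n_1}} × ⋯ × C_{p^{n_r}}` a finite abelian `p`-group with generators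
`g_1, …, g_r`, the sum `G̃ = ∑_{g ∈ G} g` of all group elements in the group algebra
`F_p[G]` satisfies `G̃ = ∏_{j=1}^{r} (g_j - 1)^(p^{n_j} - 1)`. -/
theorem sum_all_elements_eq_prod (p : ℕ) [Fact p.Prime] (r : ℕ) (n : Fin r → ℕ)
    (hn : ∀ i, 1 ≤ n i) :
    ∑ g : PGroup p r n, (MonoidAlgebra.of (ZMod p) (PGroup p r n) g) =
      ∏ j : Fin r,
        (MonoidAlgebra.of (ZMod p) (PGroup p r n) (pGen p r n j) - 1) ^ (p ^ n j - 1) := by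
  haveI hq : ∀ j : Fin r, NeZero (p ^ n j) :=
    fun j => ⟨(pow_pos (Fact.out (p := p.Prime)).pos (n j)).ne'⟩
  have key : ∀ j : Fin r,
      (MonoidAlgebra.of (ZMod p) (PGroup p r n) (pGen p r n j) - 1) ^ (p ^ n j - 1) =
        ∑ x : Multiplicative (ZMod (p ^ n j)),
          MonoidAlgebra.of (ZMod p) (PGroup p r n) (Pi.mulSingle j x) := by
    intro j
    rw [alg_lemma p (n j)]
    have h1 : ∀ i : ℕ, (MonoidAlgebra.of (ZMod p) (PGroup p r n) (pGen p r n j)) ^ i =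
        MonoidAlgebra.of (ZMod p) (PGroup p r n)
          (Pi.mulSingle j (Multiplicative.ofAdd (i : ZMod (p ^ n j)))) := by
      intro i
      rw [← map_pow]
      congr 1
      unfold pGen
      rw [← Pi.mulSingle_pow]
      congr 1
      rw [← ofAdd_nsmul]
      congr 1
      simp
    simp_rw [h1]
    refine (sum_zmod_range
      (fun x => MonoidAlgebra.of (ZMod p) (PGroup p r n)
        (Pi.mulSingle j (Multiplicative.ofAdd x)))).trans ?_
    exact Fintype.sum_equiv Multiplicative.ofAdd _ _ (fun x => rfl)
  simp_rw [key]
  rw [Finset.prod_univ_sum, Fintype.piFinset_univ]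
  refine Finset.sum_congr rfl fun g _ => ?_
  rw [← map_prod, Finset.univ_prod_mulSingle]
end

section
/- Let p be a prime and let G = C_{p^{n_1}} × ⋯ × C_{p^{n_r}} be a finite abelian p-group, where the i-th factor is cyclic of order p^{n_i} with generator g_i (n_i ≥ 1). Then the module of Kähler differentials Ω_{F_p[G]/F_p} of the group algebra F_p[G] is a free F_p[G]-module of rank r with basis dg_1, …, dg_r. -/
/-! Over a ring `k` of characteristic `p`, the `i`-th coordinate of `g ∈ G`, read in `k`, is a
well-defined additive character `a_i` because `p ∣ p ^ n_i`. The Euler derivation `g ↦ a_i(g) g`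
of this character, multiplied by `g_i⁻¹`, is a derivation `∂_i` of `k[G]` with
`∂_i g_j = δ_ij`. The induced map `Ω → k[G]^r, da ↦ (∂_i a)_i` is then a left inverse of
`k[G]^r → Ω, e_i ↦ dg_i`, and also a right inverse because the `g_i` generate `k[G]` as an
algebra. -/

open KaehlerDifferential

theorem KaehlerDifferential.exists_basis_D_of_derivations {R A ι : Type*} [CommRing R]
    [CommRing A] [Algebra R A] [Finite ι] [DecidableEq ι] (x : ι → A)
    (hx : Algebra.adjoin R (Set.range x) = ⊤) (δ : ι → Derivation R A A)
    (hδ : ∀ i j, δ i (x j) = (Pi.single j 1 : ι → A) i) :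
    ∃ b : Module.Basis ι A Ω[A⁄R], ∀ i, b i = D R A (x i) := by
  let ψ : (ι → A) →ₗ[A] Ω[A⁄R] := (Pi.basisFun A ι).constr A fun i => D R A (x i)
  let φ : Ω[A⁄R] →ₗ[A] ι → A := LinearMap.pi fun i => (δ i).liftKaehlerDifferential
  have hψ (j : ι) : ψ (Pi.single j 1) = D R A (x j) := by
    rw [← Pi.basisFun_apply, Module.Basis.constr_basis]
  have hφ (j : ι) : φ (D R A (x j)) = Pi.single j 1 := by
    ext i; simp [φ, hδ]
  have hφψ : φ ∘ₗ ψ = LinearMap.id :=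
    (Pi.basisFun A ι).ext fun j => by simp [hψ, hφ]
  have hψφ : ψ ∘ₗ φ = LinearMap.id := by
    ext1
    refine Derivation.ext_of_adjoin_eq_top _ hx ?_
    rintro _ ⟨j, rfl⟩
    change ψ (φ (D R A (x j))) = D R A (x j)
    rw [hφ, hψ]
  exact ⟨(Pi.basisFun A ι).map (.ofLinearMap ψ φ hψφ hφψ), fun i => by simpa using hψ i⟩

namespace MonoidAlgebra

theorem adjoin_image_of_eq_top_of_closure_eq_top {R M : Type*} [CommSemiring R] [CommMonoid M]
    {S : Set M} (hS : Submonoid.closure S = ⊤) : Algebra.adjoin R (of R M '' S) = ⊤ := by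
  rw [← Subtype.range_coe (s := S), ← Set.range_comp, Algebra.adjoin_range_eq_range_aeval,
    AlgHom.range_eq_top]
  exact mvPolynomial_aeval_of_surjective_of_closure hS

variable {k G : Type*} [CommMonoid G]

theorem leibniz_of_leibniz_on_of [CommSemiring k] {M : Type*} [AddCommMonoid M]
    [Module (MonoidAlgebra k G) M] [Module k M] [IsScalarTower k (MonoidAlgebra k G) M]
    (L : MonoidAlgebra k G →ₗ[k] M)
    (hL : ∀ g h, L (of k G (g * h)) = of k G g • L (of k G h) + of k G h • L (of k G g))
    (a b : MonoidAlgebra k G) : L (a * b) = a • L b + b • L a := by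
  induction a using MonoidAlgebra.induction_on with
  | of g =>
    induction b using MonoidAlgebra.induction_on with
    | of h => rw [← map_mul, hL]
    | add b b' hb hb' => rw [mul_add, map_add, hb, hb', map_add, smul_add, add_smul]; abel
    | smul c b hb => rw [mul_smul_comm, map_smul, hb, map_smul, smul_add, smul_comm, smul_assoc]
  | add a a' ha ha' => rw [add_mul, map_add, ha, ha', map_add, smul_add, add_smul]; abel
  | smul c a ha => rw [smul_mul_assoc, map_smul, ha, map_smul, smul_add, smul_comm b, smul_assoc]

noncomputable def eulerDerivation [CommRing k] (χ : G →* Multiplicative k) :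
    Derivation k (MonoidAlgebra k G) (MonoidAlgebra k G) :=
  let E := (MonoidAlgebra.basis G k).constr k fun g => (χ g).toAdd • of k G g
  have hE (g : G) : E (of k G g) = (χ g).toAdd • of k G g := (basis G k).constr_basis k _ g
  .mk' E <| leibniz_of_leibniz_on_of E fun g h => by
    rw [hE, hE, hE, map_mul, toAdd_mul, add_smul, map_mul, smul_eq_mul, smul_eq_mul,
      mul_smul_comm, mul_smul_comm, mul_comm (of k G h), add_comm]

theorem eulerDerivation_of [CommRing k] (χ : G →* Multiplicative k) (g : G) :
    eulerDerivation χ (of k G g) = (χ g).toAdd • of k G g :=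
  (MonoidAlgebra.basis G k).constr_basis k (fun g => (χ g).toAdd • of k G g) g

end MonoidAlgebra

namespace PGroup

variable {p r : ℕ} {n : Fin r → ℕ}

theorem pGen_pow_val [NeZero p] (g : PGroup p r n) (i : Fin r) :
    pGen p r n i ^ (g i).toAdd.val = Pi.mulSingle i (g i) := by
  rw [pGen, ← Pi.mulSingle_pow, ← ofAdd_nsmul, nsmul_one, ZMod.natCast_zmod_val, ofAdd_toAdd]

theorem closure_range_pGen [NeZero p] : Submonoid.closure (Set.range (pGen p r n)) = ⊤ := by
  refine eq_top_iff.mpr fun g _ => ?_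
  rw [← Finset.univ_prod_mulSingle g]
  refine Submonoid.prod_mem _ fun i _ => ?_
  rw [← pGen_pow_val]
  exact Submonoid.pow_mem _ (Submonoid.subset_closure (Set.mem_range_self i)) _

variable (k : Type*) [CommRing k] [CharP k p] {i : Fin r} (hi : n i ≠ 0)

noncomputable def coordChar : PGroup p r n →* Multiplicative k :=
  (AddMonoidHom.toMultiplicative (ZMod.castHom (dvd_pow_self p hi) k).toAddMonoidHom).comp
    (Pi.evalMonoidHom _ i)

theorem coordChar_pGen (j : Fin r) :
    (coordChar k hi (pGen p r n j)).toAdd = (Pi.single j 1 : Fin r → k) i := by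
  obtain rfl | hij := eq_or_ne i j
  · simp [coordChar, pGen, ZMod.cast_one (dvd_pow_self p hi)]
  · simp [coordChar, pGen, hij]

noncomputable def partialDerivation :
    Derivation k (MonoidAlgebra k (PGroup p r n)) (MonoidAlgebra k (PGroup p r n)) :=
  MonoidAlgebra.of k _ (pGen p r n i)⁻¹ • MonoidAlgebra.eulerDerivation (coordChar k hi)

theorem partialDerivation_pGen (j : Fin r) :
    partialDerivation k hi (MonoidAlgebra.of k _ (pGen p r n j)) =
      (Pi.single j 1 : Fin r → MonoidAlgebra k (PGroup p r n)) i := by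
  rw [partialDerivation, Derivation.smul_apply, MonoidAlgebra.eulerDerivation_of, coordChar_pGen]
  obtain rfl | hij := eq_or_ne i j
  · rw [Pi.single_eq_same, Pi.single_eq_same, one_smul, smul_eq_mul, ← map_mul, inv_mul_cancel,
      map_one]
  · rw [Pi.single_eq_of_ne hij, Pi.single_eq_of_ne hij, zero_smul, smul_zero]

end PGroup

/-- The module of Kähler differentials `Ω_{F_p[G]/F_p}` of the group algebra `F_p[G]`
is a free `F_p[G]`-module of rank `r` with basis `dg_1, …, dg_r`. -/
theorem kaehler_free_basis (p : ℕ) [Fact p.Prime] (r : ℕ) (n : Fin r → ℕ)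
    (hn : ∀ i, 1 ≤ n i) :
    ∃ b : Module.Basis (Fin r) (MonoidAlgebra (ZMod p) (PGroup p r n))
        (Ω[MonoidAlgebra (ZMod p) (PGroup p r n)⁄ZMod p]),
      ∀ i : Fin r,
        b i = KaehlerDifferential.D (ZMod p) (MonoidAlgebra (ZMod p) (PGroup p r n))
          (MonoidAlgebra.of (ZMod p) (PGroup p r n) (pGen p r n i)) := by
  refine KaehlerDifferential.exists_basis_D_of_derivations _ ?_
    (fun i => PGroup.partialDerivation (ZMod p) (Nat.one_le_iff_ne_zero.mp (hn i)))
    fun i j => PGroup.partialDerivation_pGen _ _ j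
  rw [Set.range_comp', MonoidAlgebra.adjoin_image_of_eq_top_of_closure_eq_top]
  exact PGroup.closure_range_pGen
end

section
/- Let A be a commutative ring, I an ideal of A, and let b_1, …, b_r ∈ A with r > 1. Suppose J = (b_1 ⋯ b_r)A + I is an ideal of A such that b_i·J ⊆ I for each i. Then for all s, t ∈ A, the element (b_1 ⋯ b_r · t + I) ⊗ d(b_1 ⋯ b_r · s + I) is zero in the tensor product (J/I) ⊗_{A/I} Ω_{(A/I)/ℤ}. -/
open TensorProduct

set_option synthInstance.maxHeartbeats 400000

/-- Let `A` be a commutative ring, `I` an ideal of `A`, and `b_1, …, b_r ∈ A` with `r > 1`.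
Suppose `J = (b_1 ⋯ b_r)A + I` is an ideal of `A` such that `b_i·J ⊆ I` for each `i`.
Then for all `s, t ∈ A`, the element `(b_1 ⋯ b_r · t + I) ⊗ d(b_1 ⋯ b_r · s + I)` is zero
in `(J/I) ⊗_{A/I} Ω_{(A/I)/ℤ}`. -/
theorem tensor_d_eq_zero {A : Type*} [CommRing A] (I J : Ideal A)
    (r : ℕ) (hr : 1 < r) (b : Fin r → A)
    (hJ : J = Ideal.span {∏ i, b i} ⊔ I)
    (hb : ∀ i, ∀ x ∈ J, b i * x ∈ I)
    (s t : A) :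
    ((⟨Ideal.Quotient.mk I ((∏ i, b i) * t),
        Ideal.mem_map_of_mem _
          (J.mul_mem_right t (hJ ▸ Ideal.mem_sup_left (Ideal.subset_span rfl)))⟩ :
        J.map (Ideal.Quotient.mk I)) ⊗ₜ[A ⧸ I]
      KaehlerDifferential.D ℤ (A ⧸ I) (Ideal.Quotient.mk I ((∏ i, b i) * s))) = 0 := by
  set p := ∏ i, b i with hp
  have hi0 : (0:ℕ) < r := by omega
  set i0 : Fin r := ⟨0, hi0⟩ with hi0d
  have h0 : i0 ∈ (Finset.univ : Finset (Fin r)) := Finset.mem_univ _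
  set q := ∏ i ∈ Finset.univ.erase i0, b i with hq
  have hpq : p = b i0 * q := (Finset.mul_prod_erase _ _ h0).symm
  have hj : (⟨1, hr⟩ : Fin r) ∈ Finset.univ.erase i0 := by
    refine Finset.mem_erase.2 ⟨?_, Finset.mem_univ _⟩
    exact Fin.ne_of_val_ne (by simp [hi0d])
  set q' := ∏ i ∈ (Finset.univ.erase i0).erase ⟨1, hr⟩, b i with hq'
  have hqq : q = b ⟨1, hr⟩ * q' := (Finset.mul_prod_erase _ _ hj).symm
  have hptJ : p * t ∈ J := J.mul_mem_right t (hJ ▸ Ideal.mem_sup_left (Ideal.subset_span rfl))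
  have hD : KaehlerDifferential.D ℤ (A ⧸ I) (Ideal.Quotient.mk I (p * s))
      = Ideal.Quotient.mk I (b i0) •
          KaehlerDifferential.D ℤ (A ⧸ I) (Ideal.Quotient.mk I (q * s))
      + Ideal.Quotient.mk I (q * s) •
          KaehlerDifferential.D ℤ (A ⧸ I) (Ideal.Quotient.mk I (b i0)) := by
    rw [hpq, mul_assoc, map_mul, Derivation.leibniz]
  set el : J.map (Ideal.Quotient.mk I) :=
    ⟨Ideal.Quotient.mk I (p * t),
      Ideal.mem_map_of_mem _
        (J.mul_mem_right t (hJ ▸ Ideal.mem_sup_left (Ideal.subset_span rfl)))⟩ with hel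
  have h1 : Ideal.Quotient.mk I (b i0) • el = 0 := by
    apply Subtype.ext
    show Ideal.Quotient.mk I (b i0) * Ideal.Quotient.mk I (p * t) = 0
    rw [← map_mul, Ideal.Quotient.eq_zero_iff_mem]
    exact hb i0 _ hptJ
  have h2 : Ideal.Quotient.mk I (q * s) • el = 0 := by
    apply Subtype.ext
    show Ideal.Quotient.mk I (q * s) * Ideal.Quotient.mk I (p * t) = 0
    rw [← map_mul, Ideal.Quotient.eq_zero_iff_mem]
    have hmem : b ⟨1, hr⟩ * (p * t) ∈ I := hb _ _ hptJ
    have : q * s * (p * t) = (q' * s) * (b ⟨1, hr⟩ * (p * t)) := by rw [hqq]; ring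
    rw [this]
    exact I.mul_mem_left _ hmem
  rw [hD, tmul_add, tmul_smul, tmul_smul, smul_tmul', smul_tmul', h1, h2, zero_tmul,
    zero_tmul, add_zero]
end
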